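/- Let σ > 0 and let μ satisfy 0 < μ < μ₂(σ), where μ₂(σ) = 1/(σ + 4), and let d₁ = (1/2 + δ(σ,μ), 1/2 + δ(σ,μ)) with δ(σ,μ) = √((σ² + 4σ)μ² − 2(σ + 2)μ + 1) / (2(σμ − 1)). Then the Fréchet derivative of the map F(x,y) = (F₁(x,y), F₂(x,y)) at d₁ has eigenvectors (1,1) and (1,−1), and the set of its eigenvalues is exactly {(σ + 4)μ − 1, (σ²μ² + 2(σ + 2)μ − 1)/(1 − σμ)}. -/

import Mathlib

/-!
The map `F` commutes with exchanging the two populations, so at a diagonal point `(d, d)` its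
Jacobian is the circulant matrix `[[A, B], [B, A]]`, whose eigenvectors are `(1, 1)` and `(1, -1)`
with eigenvalues `A + B` and `A - B`. At `d = 1/2 + δ` the displacement satisfies
`4 δ² (σ μ - 1) = (σ + 4) μ - 1`, and this relation reduces `A ± B` to the stated closed forms.
-/

noncomputable def F1 (σ μ x y : ℝ) : ℝ :=
  ((1 - x) - μ) * x * (x + σ * x * (1 - y)) - (x - μ) * (1 - x) * ((1 - x) + σ * (1 - x) * y)

noncomputable def F2 (σ μ x y : ℝ) : ℝ :=
  ((1 - y) - μ) * y * (y + σ * y * (1 - x)) - (y - μ) * (1 - y) * ((1 - y) + σ * (1 - y) * x)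

noncomputable def F (σ μ : ℝ) : ℝ × ℝ → ℝ × ℝ :=
  fun p => (F1 σ μ p.1 p.2, F2 σ μ p.1 p.2)

noncomputable def deltaD (σ μ : ℝ) : ℝ :=
  Real.sqrt ((σ^2 + 4 * σ) * μ^2 - 2 * (σ + 2) * μ + 1) / (2 * (σ * μ - 1))

open ContinuousLinearMap

section Circulant

variable {R : Type*} [CommRing R] [TopologicalSpace R] [IsTopologicalRing R]

def circulantCLM (a b : R) : R × R →L[R] R × R :=
  (a • fst R R R + b • snd R R R).prod (b • fst R R R + a • snd R R R)

theorem circulantCLM_apply_one_one (a b : R) :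
    circulantCLM a b (1, 1) = (a + b) • ((1 : R), (1 : R)) := by
  simp [circulantCLM, add_comm]

theorem circulantCLM_apply_one_neg_one (a b : R) :
    circulantCLM a b (1, -1) = (a - b) • ((1 : R), (-1 : R)) := by
  simp [circulantCLM, sub_eq_add_neg, add_comm]

end Circulant

-- The partial derivatives of `F1 = (1 - x - μ) x² (1 + σ (1 - y)) - (x - μ) (1 - x)² (1 + σ y)`.
def F1dx (σ μ x y : ℝ) : ℝ :=
  ((1 - x - μ) * 2 * x - x ^ 2) * (1 + σ * (1 - y)) - ((1 - x) ^ 2 - 2 * (x - μ) * (1 - x)) * (1 + σ * y)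

def F1dy (σ μ x : ℝ) : ℝ :=
  -σ * ((1 - x - μ) * x ^ 2 + (x - μ) * (1 - x) ^ 2)

theorem hasFDerivAt_F1_comp {E : Type*} [NormedAddCommGroup E] [NormedSpace ℝ E] {u v : E → ℝ}
    {u' v' : E →L[ℝ] ℝ} {p : E} (σ μ : ℝ) (hu : HasFDerivAt u u' p) (hv : HasFDerivAt v v' p) :
    HasFDerivAt (fun q => F1 σ μ (u q) (v q))
      (F1dx σ μ (u p) (v p) • u' + F1dy σ μ (u p) • v') p := by
  have h : HasFDerivAt (fun q => F1 σ μ (u q) (v q)) _ p :=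
    ((((hu.const_sub 1).sub_const μ).mul hu).mul
        (hu.add ((hu.const_mul σ).mul (hv.const_sub 1)))).sub
      (((hu.sub_const μ).mul (hu.const_sub 1)).mul
        ((hu.const_sub 1).add (((hu.const_sub 1).const_mul σ).mul hv)))
  refine h.congr_fderiv (ContinuousLinearMap.ext fun w => ?_)
  simp only [F1dx, F1dy, add_apply, sub_apply, smul_apply, neg_apply, smul_eq_mul,
    Pi.mul_apply, Pi.add_apply]
  ring

theorem hasFDerivAt_F_diag (σ μ d : ℝ) :
    HasFDerivAt (F σ μ) (circulantCLM (F1dx σ μ d d) (F1dy σ μ d)) (d, d) := by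
  -- `F2 σ μ x y` is `F1 σ μ y x` by definition.
  have h := (hasFDerivAt_F1_comp σ μ (hasFDerivAt_fst (p := (d, d))) hasFDerivAt_snd).prodMk
    (hasFDerivAt_F1_comp σ μ (hasFDerivAt_snd (p := (d, d))) hasFDerivAt_fst)
  rw [circulantCLM, add_comm (F1dy σ μ d • fst ℝ ℝ ℝ)]
  exact h

theorem four_mul_deltaD_sq {σ μ : ℝ} (hR : 0 ≤ ((σ + 4) * μ - 1) * (σ * μ - 1))
    (hσμ : σ * μ ≠ 1) :
    4 * deltaD σ μ ^ 2 * (σ * μ - 1) = (σ + 4) * μ - 1 := by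
  have hne : σ * μ - 1 ≠ 0 := sub_ne_zero.mpr hσμ
  rw [deltaD, div_pow, show (σ ^ 2 + 4 * σ) * μ ^ 2 - 2 * (σ + 2) * μ + 1
    = ((σ + 4) * μ - 1) * (σ * μ - 1) by ring, Real.sq_sqrt hR]
  field_simp
  ring

theorem F1dx_add_F1dy_of_sq {σ μ t : ℝ} (ht : 4 * t ^ 2 * (σ * μ - 1) = (σ + 4) * μ - 1) :
    F1dx σ μ (1/2 + t) (1/2 + t) + F1dy σ μ (1/2 + t) = (σ + 4) * μ - 1 := by
  unfold F1dx F1dy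
  linear_combination (3/2 : ℝ) * ht

theorem F1dx_sub_F1dy_of_sq {σ μ t : ℝ} (ht : 4 * t ^ 2 * (σ * μ - 1) = (σ + 4) * μ - 1)
    (hσμ : σ * μ ≠ 1) :
    F1dx σ μ (1/2 + t) (1/2 + t) - F1dy σ μ (1/2 + t)
      = (σ ^ 2 * μ ^ 2 + 2 * (σ + 2) * μ - 1) / (1 - σ * μ) := by
  rw [eq_div_iff (sub_ne_zero.mpr hσμ.symm)]
  unfold F1dx F1dy
  linear_combination (3/2 + σ/2 - σ*μ/2 : ℝ) * ht

theorem jacobian_eigenvalues_at_d1_general (σ μ : ℝ)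
    (hlo : 0 < μ) (hhi : μ < 1 / (σ + 4)) :
    ∃ a b : ℝ,
      fderiv ℝ (F σ μ) (1/2 + deltaD σ μ, 1/2 + deltaD σ μ) (1, 1) = a • ((1 : ℝ), (1 : ℝ)) ∧
      fderiv ℝ (F σ μ) (1/2 + deltaD σ μ, 1/2 + deltaD σ μ) (1, -1) = b • ((1 : ℝ), (-1 : ℝ)) ∧
      ({a, b} : Set ℝ) =
        {(σ + 4) * μ - 1, (σ^2 * μ^2 + 2 * (σ + 2) * μ - 1) / (1 - σ * μ)} := by
  have hσ4 : 0 < σ + 4 := one_div_pos.mp (hlo.trans hhi)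
  have hμ : (σ + 4) * μ < 1 := by rwa [lt_div_iff₀ hσ4, mul_comm] at hhi
  have hσμ : σ * μ < 1 := by linarith
  have hδ := four_mul_deltaD_sq (by nlinarith) hσμ.ne
  rw [(hasFDerivAt_F_diag σ μ _).fderiv, circulantCLM_apply_one_one,
    circulantCLM_apply_one_neg_one, F1dx_add_F1dy_of_sq hδ, F1dx_sub_F1dy_of_sq hδ hσμ.ne]
  exact ⟨_, _, rfl, rfl, rfl⟩

theorem jacobian_eigenvalues_at_d1 (σ μ : ℝ) (hσ : 0 < σ)
    (hlo : 0 < μ) (hhi : μ < 1 / (σ + 4)) :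
    ∃ a b : ℝ,
      fderiv ℝ (F σ μ) (1/2 + deltaD σ μ, 1/2 + deltaD σ μ) (1, 1) = a • ((1 : ℝ), (1 : ℝ)) ∧
      fderiv ℝ (F σ μ) (1/2 + deltaD σ μ, 1/2 + deltaD σ μ) (1, -1) = b • ((1 : ℝ), (-1 : ℝ)) ∧
      ({a, b} : Set ℝ) =
        {(σ + 4) * μ - 1, (σ^2 * μ^2 + 2 * (σ + 2) * μ - 1) / (1 - σ * μ)} :=
  jacobian_eigenvalues_at_d1_general σ μ hlo hhi
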